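/- arXiv:2401.15198 — 6 statements merged into one kernel-verified Lean document; each statement's English description precedes it below -/
import Mathlib

section
/- For any vertex V of K_{s-stab}(n,k) with s ≥ 2 and n ≥ sk+1, if m is the size of the orbit of V under cyclic rotation, then the sequence V+1, V+2, ..., V+m = V forms a cycle in K_{s-stab}(n,k) spanning all vertices of the orbit (i.e., consecutive shifts are adjacent and the orbit has exactly these m distinct vertices). -/
open Finset

/-- Cyclic distance between two elements of `ZMod n`. -/
def cycDist {n : ℕ} (i j : ZMod n) : ℕ := min (i - j).val (j - i).val

/-- `S` is a vertex of the `s`-stable Kneser graph `K_{s-stab}(n,k)`: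
a `k`-subset of `ZMod n` with all pairwise cyclic distances at least `s`. -/
def IsStable (n s k : ℕ) (S : Finset (ZMod n)) : Prop :=
  S.card = k ∧ ∀ i ∈ S, ∀ j ∈ S, i ≠ j → s ≤ cycDist i j

/-- Cyclic shift of a set by `t`. -/
def shiftSet {n : ℕ} (t : ZMod n) (S : Finset (ZMod n)) : Finset (ZMod n) :=
  S.image (· + t)

/-- The `s`-stable Kneser graph: vertices are stable `k`-subsets, edges between disjoint sets. -/
def stableKneser (n s k : ℕ) :
    SimpleGraph {S : Finset (ZMod n) // IsStable n s k S} where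
  Adj A B := A ≠ B ∧ Disjoint A.1 B.1
  symm := ⟨fun A B h => ⟨h.1.symm, h.2.symm⟩⟩
  loopless := ⟨fun A h => h.1 rfl⟩

/-- The orbit (class) of a vertex under cyclic rotation. -/
def orbitF (n : ℕ) (V : Finset (ZMod n)) : Finset (Finset (ZMod n)) :=
  (Finset.range n).image fun t : ℕ => shiftSet ((t : ZMod n)) V

/-!
Stability with `s ≥ 2` means that no two elements of `V` are cyclically adjacent, so `V` and
`V + 1` are disjoint, and hence so are `V + j` and `V + j + 1`. The shifts `V + j` are the iterates
of the single map `shiftSet 1` at `V`, so the orbit of `V` is the periodic orbit of this map, whose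
length is its minimal period `m ∣ n`; going once around it, `V + 1, …, V + m = V` lists every
element of the orbit exactly once.
-/

namespace Function

variable {α : Type*} [DecidableEq α] {f : α → α} {x : α}

theorem image_range_iterate_of_minimalPeriod_le {N : ℕ} (hx : 0 < minimalPeriod f x)
    (hN : minimalPeriod f x ≤ N) :
    (range N).image (f^[·] x) = (range (minimalPeriod f x)).image (f^[·] x) := by
  ext y
  simp only [mem_image, mem_range]
  constructor
  · rintro ⟨t, -, rfl⟩
    exact ⟨t % minimalPeriod f x, Nat.mod_lt t hx, iterate_mod_minimalPeriod_eq⟩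
  · rintro ⟨t, ht, rfl⟩
    exact ⟨t, ht.trans_le hN, rfl⟩

theorem card_image_range_minimalPeriod :
    ((range (minimalPeriod f x)).image (f^[·] x)).card = minimalPeriod f x := by
  rw [card_image_of_injOn, card_range]
  simpa only [coe_range] using iterate_injOn_Iio_minimalPeriod

theorem image_range_minimalPeriod_iterate_succ (hx : 0 < minimalPeriod f x) :
    (range (minimalPeriod f x)).image (f^[· + 1] x) =
      (range (minimalPeriod f x)).image (f^[·] x) := by
  ext y
  simp only [mem_image, mem_range]
  constructor
  · rintro ⟨t, -, rfl⟩
    exact ⟨(t + 1) % minimalPeriod f x, Nat.mod_lt _ hx, iterate_mod_minimalPeriod_eq⟩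
  · rintro ⟨t, ht, rfl⟩
    rcases Nat.eq_zero_or_pos t with rfl | ht₀
    · exact ⟨minimalPeriod f x - 1, by omega, by
        rw [Nat.sub_add_cancel hx, iterate_minimalPeriod, iterate_zero, id]⟩
    · exact ⟨t - 1, by omega, by rw [Nat.sub_add_cancel ht₀]⟩

end Function

section Shift

variable {n : ℕ}

theorem shiftSet_add (a b : ZMod n) (S : Finset (ZMod n)) :
    shiftSet (a + b) S = shiftSet a (shiftSet b S) := by
  simp only [shiftSet, image_image, Function.comp_def, add_assoc, add_comm a b]

theorem shiftSet_natCast_eq_iterate (j : ℕ) (S : Finset (ZMod n)) :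
    shiftSet (j : ZMod n) S = (shiftSet 1)^[j] S := by
  induction j with
  | zero => simp [shiftSet]
  | succ j ih =>
    rw [Function.iterate_succ_apply', ← ih, ← shiftSet_add, Nat.cast_succ, add_comm]

theorem isPeriodicPt_shiftSet_one (S : Finset (ZMod n)) :
    Function.IsPeriodicPt (shiftSet 1) n S := by
  simp [Function.IsPeriodicPt, Function.IsFixedPt, ← shiftSet_natCast_eq_iterate, shiftSet]

theorem disjoint_shiftSet_shiftSet_iff (t : ZMod n) (A B : Finset (ZMod n)) :
    Disjoint (shiftSet t A) (shiftSet t B) ↔ Disjoint A B :=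
  disjoint_image (add_left_injective t)

theorem IsStable.disjoint_shiftSet_one {s k : ℕ} {V : Finset (ZMod n)} (hV : IsStable n s k V)
    (hs : 2 ≤ s) (hn : n ≠ 1) : Disjoint V (shiftSet 1 V) := by
  rw [disjoint_left]
  intro a ha ha'
  obtain ⟨b, hb, rfl⟩ := mem_image.mp ha'
  have : Nontrivial (ZMod n) := ZMod.nontrivial_iff.mpr hn
  have hab : b + 1 ≠ b := by simp
  have hdist := hV.2 _ ha b hb hab
  have hone : (1 : ZMod n).val ≤ 1 := (ZMod.val_one_eq_one_mod n).trans_le (Nat.mod_le 1 n)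
  simp only [cycDist, add_sub_cancel_left] at hdist
  omega

end Shift

/-- Successive cyclic shifts `V+1, V+2, ..., V+m = V` (where `m` is the orbit size)
form a cycle in `K_{s-stab}(n,k)` spanning exactly the orbit of `V`. -/
theorem stmt_3 (n s k : ℕ) (hs : 2 ≤ s) (hk : 1 ≤ k) (hn : s * k + 1 ≤ n)
    (V : Finset (ZMod n)) (hV : IsStable n s k V) :
    (∀ j : ℕ, shiftSet ((j : ℕ) : ZMod n) V ≠ shiftSet ((j + 1 : ℕ) : ZMod n) V ∧
      Disjoint (shiftSet ((j : ℕ) : ZMod n) V) (shiftSet ((j + 1 : ℕ) : ZMod n) V)) ∧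
    shiftSet (((orbitF n V).card : ℕ) : ZMod n) V = V ∧
    ((Finset.range (orbitF n V).card).image
        fun j : ℕ => shiftSet ((j + 1 : ℕ) : ZMod n) V) = orbitF n V ∧
    ((Finset.range (orbitF n V).card).image
        fun j : ℕ => shiftSet ((j + 1 : ℕ) : ZMod n) V).card = (orbitF n V).card := by
  have hsk : 2 ≤ s * k := le_trans hs (Nat.le_mul_of_pos_right s hk)
  have hV₀ : V.Nonempty := card_pos.mp (by rw [hV.1]; omega)
  have hdisj (j : ℕ) :
      Disjoint (shiftSet (j : ZMod n) V) (shiftSet ((j + 1 : ℕ) : ZMod n) V) := by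
    rw [Nat.cast_succ, shiftSet_add, disjoint_shiftSet_shiftSet_iff]
    exact hV.disjoint_shiftSet_one hs (by omega)
  have hper := isPeriodicPt_shiftSet_one V
  have hpos := hper.minimalPeriod_pos (by omega)
  have horb : orbitF n V =
      (range (Function.minimalPeriod (shiftSet 1) V)).image ((shiftSet 1)^[·] V) := by
    simp only [orbitF, shiftSet_natCast_eq_iterate]
    exact Function.image_range_iterate_of_minimalPeriod_le hpos (hper.minimalPeriod_le (by omega))
  have hcard : (orbitF n V).card = Function.minimalPeriod (shiftSet 1) V := by
    rw [horb, Function.card_image_range_minimalPeriod]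
  refine ⟨fun j => ⟨(hdisj j).ne ?_, hdisj j⟩, ?_, ?_, ?_⟩
  · exact (hV₀.image _).ne_empty
  all_goals simp only [hcard, shiftSet_natCast_eq_iterate]
  · exact Function.iterate_minimalPeriod
  · rw [Function.image_range_minimalPeriod_iterate_succ hpos, ← horb]
  · rw [Function.image_range_minimalPeriod_iterate_succ hpos,
      Function.card_image_range_minimalPeriod]
end

section
/- Let s ≥ 2, k ≥ 2, and n = sk + r with r ≥ 1. If (a_1,...,a_k) is a gap sequence (each a_i ≥ s-1, sum equal to n-k) and some index i has a_{i+1} ≥ s (indices modulo k), then the classes with gap sequences (a_1,...,a_{i-1}, a_i, a_{i+1},...,a_k) and (a_1,...,a_{i-1}, a_i+1, a_{i+1}-1,...,a_k) contain disjoint representatives; i.e., these two 'friend classes' are adjacent in the class graph of K_{s-stab}(n,k). -/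
open Finset

/-- Cyclic successor of an index in `Fin k`. -/
def succIdx {k : ℕ} (i : Fin k) : Fin k := ⟨(i.1 + 1) % k, Nat.mod_lt _ i.pos⟩

/-- Cyclic rotation of a gap sequence. -/
def rotSeq {k : ℕ} (a : Fin k → ℕ) : Fin k → ℕ := fun i => a (succIdx i)

/-- Position of the `i`-th element of the vertex determined by gap sequence `a`
(starting at `0`). -/
def posOf {k : ℕ} (a : Fin k → ℕ) (i : Fin k) : ℕ :=
  ∑ j : Fin k, if (j : ℕ) < (i : ℕ) then a j + 1 else 0

/-- The vertex (starting at position `0`) with gap sequence `a`. -/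
def vertexOfGaps (n k : ℕ) (a : Fin k → ℕ) : Finset (ZMod n) :=
  Finset.univ.image fun i : Fin k => ((posOf a i : ℕ) : ZMod n)

/-- A valid gap sequence for `K_{s-stab}(n,k)`: entries at least `s-1`, summing to `n-k`. -/
def IsGapSeq (n s k : ℕ) (a : Fin k → ℕ) : Prop :=
  (∀ i, s - 1 ≤ a i) ∧ ∑ i, a i = n - k

/-- A friend move: add 1 to `a i` and subtract 1 from the cyclically next entry. -/
def FriendMove (s : ℕ) {k : ℕ} (a b : Fin k → ℕ) : Prop :=
  ∃ i : Fin k, s ≤ a (succIdx i) ∧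
    b = Function.update (Function.update a i (a i + 1)) (succIdx i) (a (succIdx i) - 1)

/-- The orbit of a gap sequence under cyclic rotation. -/
def seqOrbit {k : ℕ} (b : Fin k → ℕ) : Finset (Fin k → ℕ) :=
  (Finset.range k).image fun m => rotSeq^[m] b

/-!
Let `p₀ < ⋯ < p_{k-1}` be the positions of the vertex with gap sequence `a`, so that
`p_{m+1} = p_m + a_m + 1` and `p_{k-1} + a_{k-1} + 1 = n`. After the friend move at `i`,
rotating the new vertex by one step (two steps when `succIdx i` wraps around to `0`) puts its
`m`-th element at `p_m + 1`, except the `succIdx i`-th one, which lands at `p_m + 2`. All these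
points lie strictly inside gaps of the original vertex: every gap has length at least
`s - 1 ≥ 1`, and the gap after `p_{succIdx i}` has length at least `s ≥ 2`.
-/

lemma posOf_eq_sum_Iio {k : ℕ} (a : Fin k → ℕ) (m : Fin k) :
    posOf a m = ∑ j ∈ Iio m, (a j + 1) := by
  rw [posOf, ← sum_filter]
  congr 1
  ext j
  simp

lemma posOf_add_eq_sum_Iic {k : ℕ} (a : Fin k → ℕ) (m : Fin k) :
    posOf a m + (a m + 1) = ∑ j ∈ Iic m, (a j + 1) := by
  rw [posOf_eq_sum_Iio, ← Iio_insert, sum_insert (by simp), add_comm]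

lemma posOf_mono {k : ℕ} (a : Fin k → ℕ) {m m' : Fin k} (h : m ≤ m') :
    posOf a m ≤ posOf a m' := by
  simp only [posOf_eq_sum_Iio]
  exact sum_le_sum_of_subset (Iio_subset_Iio h)

lemma posOf_add_le_posOf {k : ℕ} (a : Fin k → ℕ) {m m' : Fin k} (h : m' < m) :
    posOf a m' + (a m' + 1) ≤ posOf a m := by
  rw [posOf_add_eq_sum_Iic, posOf_eq_sum_Iio]
  exact sum_le_sum_of_subset fun j hj => mem_Iio.mpr ((mem_Iic.mp hj).trans_lt h)

lemma posOf_add_le_sum {k : ℕ} (a : Fin k → ℕ) (m : Fin k) :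
    posOf a m + (a m + 1) ≤ ∑ j, (a j + 1) := by
  rw [posOf_add_eq_sum_Iic]
  exact sum_le_sum_of_subset (subset_univ _)

lemma natCast_posOf_ne_posOf_add {k n : ℕ} (a : Fin k → ℕ) (hn : ∑ j, (a j + 1) = n)
    (m m' : Fin k) {c : ℕ} (hc0 : 0 < c) (hc : c ≤ a m') :
    ((posOf a m : ℕ) : ZMod n) ≠ ((posOf a m' + c : ℕ) : ZMod n) := by
  have hm' := posOf_add_le_sum a m'
  have hm : posOf a m < n := by have := posOf_add_le_sum a m; omega
  rw [Ne, ZMod.natCast_eq_natCast_iff', Nat.mod_eq_of_lt hm, Nat.mod_eq_of_lt (by omega)]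
  rcases le_or_gt m m' with h | h
  · have := posOf_mono a h; omega
  · have := posOf_add_le_posOf a h; omega

lemma posOf_update {k : ℕ} (a : Fin k → ℕ) (i m : Fin k) (x : ℕ) :
    posOf (Function.update a i x) m + (if i < m then a i else 0) =
      posOf a m + (if i < m then x else 0) := by
  simp only [posOf_eq_sum_Iio]
  by_cases him : i < m
  · have hi : i ∈ Iio m := mem_Iio.mpr him
    rw [← add_sum_erase _ _ hi, ← add_sum_erase _ _ hi,
      sum_congr rfl fun j hj => by rw [Function.update_of_ne (ne_of_mem_erase hj)]]
    simp only [if_pos him, Function.update_self]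
    ring
  · rw [sum_congr rfl fun j hj => by
      rw [Function.update_of_ne (by rintro rfl; exact him (mem_Iio.mp hj))], if_neg him, if_neg him]

lemma succIdx_ne_self {k : ℕ} (hk : 2 ≤ k) (i : Fin k) : succIdx i ≠ i := by
  simp only [succIdx, Ne, Fin.ext_iff]
  rcases Nat.lt_or_ge (i.1 + 1) k with h | h
  · rw [Nat.mod_eq_of_lt h]; omega
  · rw [show i.1 + 1 = k by omega, Nat.mod_self]; omega

lemma posOf_friend {k : ℕ} (hk : 2 ≤ k) (a : Fin k → ℕ) (i : Fin k)
    (hu : 1 ≤ a (succIdx i)) (m : Fin k) :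
    posOf (Function.update (Function.update a i (a i + 1)) (succIdx i)
        (a (succIdx i) - 1)) m + (if succIdx i < m then 1 else 0) =
      posOf a m + (if i < m then 1 else 0) := by
  have h₁ := posOf_update (Function.update a i (a i + 1)) (succIdx i) m (a (succIdx i) - 1)
  have h₂ := posOf_update a i m (a i + 1)
  rw [Function.update_of_ne (succIdx_ne_self hk i)] at h₁
  split_ifs at h₁ h₂ ⊢ <;> omega

lemma posOf_friend_add {k : ℕ} (hk : 2 ≤ k) (a : Fin k → ℕ) (i : Fin k)
    (hu : 1 ≤ a (succIdx i)) (m : Fin k) :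
    posOf (Function.update (Function.update a i (a i + 1)) (succIdx i)
        (a (succIdx i) - 1)) m + (if i.1 + 1 < k then 1 else 2) =
      posOf a m + (if m = succIdx i then 2 else 1) := by
  have h := posOf_friend hk a i hu m
  have hm := m.2
  have hu' : (succIdx i).1 = if i.1 + 1 < k then i.1 + 1 else 0 := by
    split_ifs with hwrap
    · exact Nat.mod_eq_of_lt hwrap
    · simp [succIdx, show i.1 + 1 = k by omega]
  simp only [Fin.lt_def, Fin.ext_iff, hu'] at h ⊢
  split_ifs at h hu' ⊢ <;> omega

theorem stmt_7_general (s k r : ℕ) (hs : 2 ≤ s) (hk : 2 ≤ k)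
    (a : Fin k → ℕ) (ha : IsGapSeq (s * k + r) s k a)
    (i : Fin k) (hi : s ≤ a (succIdx i)) :
    ∃ t : ZMod (s * k + r),
      Disjoint (vertexOfGaps (s * k + r) k a)
        (shiftSet t (vertexOfGaps (s * k + r) k
          (Function.update (Function.update a i (a i + 1)) (succIdx i)
            (a (succIdx i) - 1)))) := by
  obtain ⟨hge, hsum⟩ := ha
  have hn : ∑ j, (a j + 1) = s * k + r := by
    rw [sum_add_distrib, hsum, sum_const, card_univ, Fintype.card_fin, smul_eq_mul, mul_one]
    have : k ≤ s * k := Nat.le_mul_of_pos_left k (by omega)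
    omega
  refine ⟨((if i.1 + 1 < k then 1 else 2 : ℕ) : ZMod (s * k + r)), disjoint_left.mpr ?_⟩
  rintro _ hx hx'
  simp only [vertexOfGaps, shiftSet, mem_image, mem_univ, true_and] at hx hx'
  obtain ⟨m, rfl⟩ := hx
  obtain ⟨_, ⟨m', rfl⟩, hxy⟩ := hx'
  have hgap : (if m' = succIdx i then 2 else 1) ≤ a m' := by
    split_ifs with hm'
    · rw [hm']; omega
    · have := hge m'; omega
  refine natCast_posOf_ne_posOf_add a hn m m' (by split_ifs <;> omega) hgap ?_
  rw [← posOf_friend_add hk a i (by omega) m', Nat.cast_add, hxy]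

/-- Friend classes contain disjoint representatives, i.e. friend classes are
adjacent in the class graph of `K_{s-stab}(n,k)`. -/
theorem stmt_7 (s k r : ℕ) (hs : 2 ≤ s) (hk : 2 ≤ k) (hr : 1 ≤ r)
    (a : Fin k → ℕ) (ha : IsGapSeq (s * k + r) s k a)
    (i : Fin k) (hi : s ≤ a (succIdx i)) :
    ∃ t : ZMod (s * k + r),
      Disjoint (vertexOfGaps (s * k + r) k a)
        (shiftSet t (vertexOfGaps (s * k + r) k
          (Function.update (Function.update a i (a i + 1)) (succIdx i)
            (a (succIdx i) - 1)))) :=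
  stmt_7_general s k r hs hk a ha i hi
end

section
/- Let s ≥ 2, k ≥ 1, and n = sk + r with r ≥ 1. The graph SCK on gap-sequence classes, with edges given by the friend relation, is connected. In particular, every class is connected to the class (s-1, s-1, ..., s-1, s-1+r) by a path of friend moves. -/
open Finset

/-! With `c = s - 1`, give position `i` the weight `(i + 1) % k`, which vanishes only at the
last position, and let the potential be the weighted sum of the excesses `a i - c`. While the
potential is positive, some position `p < k - 1` has positive excess, and the friend move at the
cyclic predecessor of `p` shifts one unit of excess from `p` onto it, lowering the potential by
exactly one. Once the potential vanishes all the excess sits at the last position, and the sum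
`n - k` forces the sequence to be `(c, …, c, c + r)`. -/

open Function

lemma Fintype.sum_apply_update_add {ι α M : Type*} [Fintype ι] [DecidableEq ι] [AddCommMonoid M]
    (F : ι → α → M) (a : ι → α) (j : ι) (v : α) :
    ∑ i, F i (update a j v i) + F j (a j) = ∑ i, F i (a i) + F j v := by
  rw [Fintype.sum_eq_sum_compl_add j, Fintype.sum_eq_sum_compl_add j (fun i => F i (a i)),
    update_self, Finset.sum_congr rfl fun i hi => by rw [update_of_ne (by simpa using hi)]]
  abel

lemma Fintype.sum_apply_update_update_add {ι α M : Type*} [Fintype ι] [DecidableEq ι]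
    [AddCommMonoid M] (F : ι → α → M) (a : ι → α) {j p : ι} (hjp : j ≠ p) (u v : α) :
    ∑ i, F i (update (update a j u) p v i) + F j (a j) + F p (a p) =
      ∑ i, F i (a i) + F j u + F p v := by
  have h₁ := Fintype.sum_apply_update_add F (update a j u) p v
  have h₂ := Fintype.sum_apply_update_add F a j u
  rw [update_of_ne hjp.symm] at h₁
  rw [add_right_comm, h₁, add_right_comm, h₂]

section GapPotential

variable {k c : ℕ} {a : Fin k → ℕ}

lemma succIdx_val_of_lt {i : Fin k} (h : i.val + 1 < k) : (succIdx i).val = i.val + 1 :=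
  Nat.mod_eq_of_lt h

lemma succIdx_val_of_eq {i : Fin k} (h : i.val + 1 = k) : (succIdx i).val = 0 := by
  simp [succIdx, h]

lemma succIdx_surjective : Surjective (succIdx : Fin k → Fin k) := by
  intro p
  by_cases hp : p.val = 0
  · have hk : 0 < k := p.pos
    exact ⟨⟨k - 1, by omega⟩, Fin.ext <| by rw [succIdx_val_of_eq (by simp; omega), hp]⟩
  · refine ⟨⟨p.val - 1, by omega⟩, Fin.ext ?_⟩
    rw [succIdx_val_of_lt (by simp; omega)]
    simp only
    omega

def gapPotential (c : ℕ) (a : Fin k → ℕ) : ℕ :=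
  ∑ i, (a i - c) * (succIdx i : ℕ)

lemma friendMove_gapPotential {b : Fin k → ℕ} {j : Fin k} (ha : ∀ i, c ≤ a i)
    (hap : c + 1 ≤ a (succIdx j)) (hpk : (succIdx j).val + 1 < k)
    (hb : b = update (update a j (a j + 1)) (succIdx j) (a (succIdx j) - 1)) :
    (∀ i, c ≤ b i) ∧ ∑ i, b i = ∑ i, a i ∧ gapPotential c b + 1 = gapPotential c a := by
  have hjp : j ≠ succIdx j := fun h => by
    have hval := congrArg Fin.val h
    rw [← hval] at hpk
    rw [succIdx_val_of_lt hpk] at hval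
    omega
  have hb_ge : ∀ i, c ≤ b i := by
    intro i
    rw [hb, update_apply, update_apply]
    split_ifs
    · omega
    · have := ha j; omega
    · exact ha i
  have hsum := Fintype.sum_apply_update_update_add (fun _ x => x) a hjp
    (a j + 1) (a (succIdx j) - 1)
  have hpot := Fintype.sum_apply_update_update_add (fun i x => (x - c) * (succIdx i : ℕ)) a hjp
    (a j + 1) (a (succIdx j) - 1)
  rw [← hb, succIdx_val_of_lt hpk] at hpot
  rw [← hb] at hsum
  refine ⟨hb_ge, by omega, ?_⟩
  have := ha j
  have e₁ : (a j + 1 - c) * (succIdx j : ℕ) = (a j - c) * succIdx j + succIdx j := by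
    rw [show a j + 1 - c = a j - c + 1 by omega, add_one_mul]
  have e₂ : (a (succIdx j) - c) * ((succIdx j : ℕ) + 1) =
      (a (succIdx j) - 1 - c) * ((succIdx j : ℕ) + 1) + (succIdx j + 1) := by
    rw [show a (succIdx j) - c = a (succIdx j) - 1 - c + 1 by omega, add_one_mul]
  unfold gapPotential
  omega

lemma exists_friendMove_of_gapPotential_ne_zero (ha : ∀ i, c ≤ a i)
    (h : gapPotential c a ≠ 0) :
    ∃ b, FriendMove (c + 1) a b ∧ (∀ i, c ≤ b i) ∧ ∑ i, b i = ∑ i, a i ∧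
      gapPotential c b < gapPotential c a := by
  obtain ⟨p, -, hp⟩ := Finset.exists_ne_zero_of_sum_ne_zero h
  have hap : c + 1 ≤ a p := by have := left_ne_zero_of_mul hp; omega
  have hpk : p.val + 1 < k := by
    by_contra
    exact right_ne_zero_of_mul hp (succIdx_val_of_eq (by omega))
  obtain ⟨j, rfl⟩ := succIdx_surjective p
  obtain ⟨hb_ge, hsum, hpot⟩ := friendMove_gapPotential ha hap hpk rfl
  exact ⟨_, ⟨j, hap, rfl⟩, hb_ge, hsum, by omega⟩

lemma eq_of_gapPotential_eq_zero (h : gapPotential c a = 0) {i : Fin k}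
    (hi : i.val + 1 < k) (hai : c ≤ a i) : a i = c := by
  have := Finset.sum_eq_zero_iff.mp h i (Finset.mem_univ i)
  rw [succIdx_val_of_lt hi, Nat.mul_eq_zero] at this
  omega

lemma exists_reflTransGen_gapPotential_eq_zero (ha : ∀ i, c ≤ a i) :
    ∃ b, Relation.ReflTransGen (FriendMove (c + 1)) a b ∧ (∀ i, c ≤ b i) ∧
      ∑ i, b i = ∑ i, a i ∧ gapPotential c b = 0 := by
  induction hN : gapPotential c a using Nat.strong_induction_on generalizing a with
  | _ N ih =>
    by_cases h0 : N = 0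
    · exact ⟨a, .refl, ha, rfl, hN ▸ h0⟩
    obtain ⟨b, hab, hb, hsum, hlt⟩ := exists_friendMove_of_gapPotential_ne_zero ha (hN ▸ h0)
    obtain ⟨d, hbd, hd, hsum', hd0⟩ := ih _ (hN ▸ hlt) hb rfl
    exact ⟨d, .head hab hbd, hd, hsum'.trans hsum, hd0⟩

end GapPotential

lemma eq_ite_last_of_sum_eq {l c m : ℕ} {a : Fin (l + 1) → ℕ}
    (ha : ∀ i : Fin (l + 1), i.val < l → a i = c) (hsum : ∑ i, a i = l * c + m) :
    a = fun i => if i.val = l then m else c := by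
  have hlast : a (Fin.last l) = m := by
    rw [Fin.sum_univ_castSucc, Finset.sum_congr rfl fun i _ => ha i.castSucc i.isLt] at hsum
    simp only [Finset.sum_const, Finset.card_univ, Fintype.card_fin, smul_eq_mul] at hsum
    omega
  funext i
  split_ifs with hi
  · rwa [show i = Fin.last l from Fin.ext hi]
  · exact ha i (by omega)

theorem stmt_8_general (s k r : ℕ) (hs : 2 ≤ s) (hk : 1 ≤ k)
    (a : Fin k → ℕ) (ha : IsGapSeq (s * k + r) s k a) :
    Relation.ReflTransGen
      (fun x y : Fin k → ℕ => FriendMove s x y ∨ FriendMove s y x ∨ y = rotSeq x)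
      a (fun i : Fin k => if (i : ℕ) = k - 1 then s - 1 + r else s - 1) := by
  obtain ⟨c, rfl⟩ : ∃ c, s = c + 1 := ⟨s - 1, by omega⟩
  obtain ⟨l, rfl⟩ : ∃ l, k = l + 1 := ⟨k - 1, by omega⟩
  obtain ⟨hfloor, hsum⟩ := ha
  simp only [Nat.add_sub_cancel] at hfloor hsum ⊢
  obtain ⟨b, hab, hb, hsum_b, hb0⟩ := exists_reflTransGen_gapPotential_eq_zero hfloor
  have hb_eq : b = fun i => if i.val = l then c + r else c := by
    refine eq_ite_last_of_sum_eq (fun i hi => eq_of_gapPotential_eq_zero hb0 (by omega) (hb i)) ?_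
    rw [hsum_b, hsum]
    ring_nf
    omega
  rw [← hb_eq]
  exact Relation.ReflTransGen.mono (fun _ _ => Or.inl) _ _ hab

/-- The graph `SCK` on gap-sequence classes with edges given by the friend relation is
connected: every class is joined to the class `(s-1, ..., s-1, s-1+r)` by a path of
friend moves (in either direction, identifying sequences up to cyclic rotation). -/
theorem stmt_8 (s k r : ℕ) (hs : 2 ≤ s) (hk : 1 ≤ k) (hr : 1 ≤ r)
    (a : Fin k → ℕ) (ha : IsGapSeq (s * k + r) s k a) :
    Relation.ReflTransGen
      (fun x y : Fin k → ℕ => FriendMove s x y ∨ FriendMove s y x ∨ y = rotSeq x)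
      a (fun i : Fin k => if (i : ℕ) = k - 1 then s - 1 + r else s - 1) :=
  stmt_8_general s k r hs hk a ha
end

section
/- Let s ≥ 2 and n = sk + r with r ≥ 1. For any class A of K_{s-stab}(n,k), the number of distinct friend classes of A is strictly less than the size of the orbit A. More precisely, if A has orbit size n/d, then A has at most k/d friend classes, and k/d < n/d. -/
/-!
If `a` has period `p = k / d`, rotating by `p` maps the friend move of `a` at position `i` to the
friend move at position `i - p`, so the friend class only depends on `i mod p`: there are at most
`k / d` friend classes. Moreover `k + d ≤ 2k ≤ sk ≤ n`, hence `k / d < n / d`.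
-/

open Finset

open Fin.NatCast Fin.CommRing

section Rotation

variable {k : ℕ} [NeZero k]

lemma succIdx_eq_add_one (i : Fin k) : succIdx i = i + 1 := by
  ext; simp [succIdx, Fin.add_def]

lemma rotSeq_iterate (a : Fin k → ℕ) (m : ℕ) : rotSeq^[m] a = fun i => a (i + m) := by
  induction m generalizing a with
  | zero => simp
  | succ m ih =>
    rw [Function.iterate_succ_apply, ih]
    funext i
    simp only [rotSeq, succIdx_eq_add_one]
    rw [Nat.cast_succ, add_assoc]

lemma rotSeq_iterate_card (a : Fin k → ℕ) : rotSeq^[k] a = a := by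
  simp [rotSeq_iterate]

lemma seqOrbit_eq_image_univ (b : Fin k → ℕ) :
    seqOrbit b = Finset.univ.image fun j : Fin k => fun i => b (i + j) := by
  ext x
  simp only [seqOrbit, rotSeq_iterate, Finset.mem_image, Finset.mem_range, Finset.mem_univ,
    true_and]
  constructor
  · rintro ⟨m, -, rfl⟩
    exact ⟨m, rfl⟩
  · rintro ⟨j, rfl⟩
    exact ⟨j, j.isLt, by rw [Fin.cast_val_eq_self]⟩

lemma seqOrbit_rotSeq_iterate (b : Fin k → ℕ) (m : ℕ) :
    seqOrbit (rotSeq^[m] b) = seqOrbit b := by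
  have hsurj : Finset.univ.image (· + (m : Fin k)) = Finset.univ :=
    Finset.image_univ_of_surjective (add_right_surjective _)
  simp only [seqOrbit_eq_image_univ, rotSeq_iterate]
  conv_rhs => rw [← hsurj, Finset.image_image]
  simp only [Function.comp_def, add_assoc]

end Rotation

section FriendClasses

variable {k : ℕ}

def friendStep (a : Fin k → ℕ) (i : Fin k) : Fin k → ℕ :=
  Function.update (Function.update a i (a i + 1)) (succIdx i) (a (succIdx i) - 1)

def friendClasses (s : ℕ) (a : Fin k → ℕ) : Set (Finset (Fin k → ℕ)) :=
  {C | ∃ b, FriendMove s a b ∧ C = seqOrbit b}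

variable [NeZero k]

lemma rotSeq_iterate_friendStep (a : Fin k → ℕ) (i : Fin k) (m : ℕ) :
    rotSeq^[m] (friendStep a i) = friendStep (rotSeq^[m] a) (i - m) := by
  have hsucc (j : Fin k) : j + m = i + 1 ↔ j = i - m + 1 := by
    rw [sub_add_eq_add_sub, eq_sub_iff_add_eq]
  have hself (j : Fin k) : j + m = i ↔ j = i - m := eq_sub_iff_add_eq.symm
  have hshift : i - m + 1 + m = i + 1 := by abel
  funext j
  simp only [rotSeq_iterate, friendStep, succIdx_eq_add_one, Function.update_apply, hsucc, hself,
    hshift, sub_add_cancel]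

lemma seqOrbit_friendStep_mod {p : ℕ} {a : Fin k → ℕ} (ha : Function.IsPeriodicPt rotSeq p a)
    (i : Fin k) :
    seqOrbit (friendStep a ((i.val % p : ℕ) : Fin k)) = seqOrbit (friendStep a i) := by
  set q := i.val / p * p
  have hq : rotSeq^[q] a = a := ha.const_mul _
  have hi : ((i.val % p : ℕ) : Fin k) = i - q := by
    rw [eq_sub_iff_add_eq, ← Nat.cast_add, Nat.mod_add_div', Fin.cast_val_eq_self]
  calc seqOrbit (friendStep a ((i.val % p : ℕ) : Fin k))
      = seqOrbit (friendStep (rotSeq^[q] a) (i - q)) := by rw [hi, hq]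
    _ = seqOrbit (friendStep a i) := by
      rw [← rotSeq_iterate_friendStep, seqOrbit_rotSeq_iterate]

lemma friendClasses_subset_image_range {p : ℕ} {a : Fin k → ℕ}
    (ha : Function.IsPeriodicPt rotSeq p a) (hp : 0 < p) (s : ℕ) :
    friendClasses s a ⊆ (Finset.range p).image fun j : ℕ => seqOrbit (friendStep a j) := by
  rintro C ⟨b, ⟨i, -, rfl⟩, rfl⟩
  rw [Finset.coe_image]
  exact ⟨i.val % p, Finset.mem_range.2 (Nat.mod_lt _ hp), seqOrbit_friendStep_mod ha i⟩

lemma ncard_friendClasses_le_of_isPeriodicPt {p : ℕ} {a : Fin k → ℕ}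
    (ha : Function.IsPeriodicPt rotSeq p a) (hp : 0 < p) (s : ℕ) :
    (friendClasses s a).ncard ≤ p :=
  calc (friendClasses s a).ncard
      ≤ ((Finset.range p).image fun j : ℕ => seqOrbit (friendStep a j)).card := by
        rw [← Set.ncard_coe_finset]
        exact Set.ncard_le_ncard (friendClasses_subset_image_range ha hp s) (Finset.finite_toSet _)
    _ ≤ p := Finset.card_image_le.trans (Finset.card_range p).le

end FriendClasses

lemma Nat.div_lt_div_of_add_le {k n d : ℕ} (hd : 0 < d) (h : k + d ≤ n) : k / d < n / d :=
  calc k / d < k / d + 1 := Nat.lt_succ_self _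
    _ = (k + d) / d := (Nat.add_div_right k hd).symm
    _ ≤ n / d := Nat.div_le_div_right h

theorem stmt_9_general (s k r d : ℕ) (hs : 2 ≤ s) (hk : 1 ≤ k)
    (a : Fin k → ℕ)
    (hd : d ∣ k ∧ rotSeq^[k / d] a = a ∧
      ∀ e : ℕ, e ∣ k → rotSeq^[k / e] a = a → e ≤ d) :
    Set.ncard {C : Finset (Fin k → ℕ) | ∃ b, FriendMove s a b ∧ C = seqOrbit b} ≤ k / d ∧
    k / d < (s * k + r) / d := by
  have : NeZero k := ⟨by omega⟩
  obtain ⟨hdk, hperiod, hmax⟩ := hd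
  have hd0 : 0 < d := hmax 1 (one_dvd k) (by simpa using rotSeq_iterate_card a)
  have hdle : d ≤ k := Nat.le_of_dvd hk hdk
  refine ⟨ncard_friendClasses_le_of_isPeriodicPt hperiod (Nat.div_pos hdle hd0) s,
    Nat.div_lt_div_of_add_le hd0 ?_⟩
  nlinarith

/-- A class with orbit size `n/d` (where `d` is the largest divisor of `k` such that
its gap sequence has period `k/d`) has at most `k/d` friend classes, and `k/d < n/d`;
in particular the number of friend classes is strictly less than the orbit size. -/
theorem stmt_9 (s k r d : ℕ) (hs : 2 ≤ s) (hk : 1 ≤ k) (hr : 1 ≤ r)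
    (a : Fin k → ℕ) (ha : IsGapSeq (s * k + r) s k a)
    (hd : d ∣ k ∧ rotSeq^[k / d] a = a ∧
      ∀ e : ℕ, e ∣ k → rotSeq^[k / e] a = a → e ≤ d) :
    Set.ncard {C : Finset (Fin k → ℕ) | ∃ b, FriendMove s a b ∧ C = seqOrbit b} ≤ k / d ∧
    k / d < (s * k + r) / d :=
  stmt_9_general s k r d hs hk a hd
end

section
/- Let s ≥ 2 and n = sk + r with r ≥ 1. Every gap sequence (a_1,...,a_k) with each a_i ≥ s-1 and sum n-k can be transformed into the sequence (s-1, s-1, ..., s-1, s-1+r) by a finite sequence of friend moves (a_i, a_{i+1}) → (a_i+1, a_{i+1}-1) and their inverses, staying within valid gap sequences at every step. -/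
open Finset

/-!
Every inverse friend move that carries a unit of excess from an entry `i < k - 1` to entry
`i + 1` strictly lowers the moment `∑ (k - 1 - i) a_i`, preserves the sum and keeps every entry
at least `s - 1`. Repeating such moves while some non-last entry exceeds `s - 1` therefore
terminates, and it can only stop at `(s - 1, …, s - 1, s - 1 + r)`.
-/

open Relation

namespace GapSeq

variable {k : ℕ}

def concentrated (m r : ℕ) : Fin k → ℕ := fun i => if (i : ℕ) = k - 1 then m + r else m

def moment (a : Fin k → ℕ) : ℕ := ∑ i : Fin k, (k - 1 - (i : ℕ)) * a i

def shiftRight (a : Fin k → ℕ) (i : Fin k) : Fin k → ℕ :=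
  a - Pi.single i 1 + Pi.single (succIdx i) 1

lemma val_succIdx_of_lt {i : Fin k} (hi : (i : ℕ) + 1 < k) : (succIdx i : ℕ) = i + 1 :=
  Nat.mod_eq_of_lt hi

lemma succIdx_ne_self_of_lt {i : Fin k} (hi : (i : ℕ) + 1 < k) : succIdx i ≠ i := by
  intro h
  have := congrArg Fin.val h
  rw [val_succIdx_of_lt hi] at this
  omega

lemma sum_mul_add_eq_of_add_single_eq {a b : Fin k → ℕ} {i j : Fin k} (w : Fin k → ℕ)
    (h : b + Pi.single i 1 = a + Pi.single j 1) :
    ∑ l, w l * b l + w i = ∑ l, w l * a l + w j := by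
  have := congrArg (fun f : Fin k → ℕ => ∑ l, w l * f l) h
  simpa [mul_add, Finset.sum_add_distrib, Pi.single_apply] using this

lemma shiftRight_add_single {a : Fin k → ℕ} {i : Fin k} (hi : 1 ≤ a i) :
    shiftRight a i + Pi.single i 1 = a + Pi.single (succIdx i) 1 := by
  funext l
  by_cases hl : l = i
  · subst hl; simp only [shiftRight, Pi.add_apply, Pi.sub_apply, Pi.single_eq_same]; omega
  · simp [shiftRight, hl]

lemma le_shiftRight {a : Fin k → ℕ} {i : Fin k} {m : ℕ} (hm : ∀ l, m ≤ a l) (hi : m < a i)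
    (l : Fin k) : m ≤ shiftRight a i l := by
  by_cases hl : l = i
  · subst hl; simp only [shiftRight, Pi.add_apply, Pi.sub_apply, Pi.single_eq_same]; omega
  · simpa [shiftRight, hl] using le_add_right (hm l)

lemma friendMove_shiftRight {s : ℕ} {a : Fin k → ℕ} {i : Fin k} (hne : succIdx i ≠ i)
    (hi : 1 ≤ a i) (hsucc : s - 1 ≤ a (succIdx i)) : FriendMove s (shiftRight a i) a := by
  refine ⟨i, by
    simp only [shiftRight, Pi.add_apply, Pi.sub_apply, Pi.single_eq_same, Pi.single_eq_of_ne hne]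
    omega, ?_⟩
  funext l
  by_cases hl : l = succIdx i
  · subst hl; simp [shiftRight, hne]
  by_cases hl' : l = i
  · subst hl'; simp [shiftRight, hne.symm]; omega
  · simp [shiftRight, hl, hl']

lemma moment_shiftRight {a : Fin k → ℕ} {i : Fin k} (hik : (i : ℕ) + 1 < k) (hi : 1 ≤ a i) :
    moment (shiftRight a i) + 1 = moment a := by
  have := sum_mul_add_eq_of_add_single_eq (fun l : Fin k => k - 1 - (l : ℕ))
    (shiftRight_add_single hi)
  rw [val_succIdx_of_lt hik] at this
  unfold moment
  omega

lemma sum_shiftRight {a : Fin k → ℕ} {i : Fin k} (hi : 1 ≤ a i) :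
    ∑ l, shiftRight a i l = ∑ l, a l := by
  simpa using sum_mul_add_eq_of_add_single_eq 1 (shiftRight_add_single hi)

lemma eq_concentrated {m r : ℕ} {a : Fin k → ℕ} (h : ∀ i : Fin k, (i : ℕ) < k - 1 → a i = m)
    (hsum : ∑ i, a i = m * k + r) : a = concentrated m r := by
  cases k with
  | zero => exact funext (fun i => i.elim0)
  | succ n =>
    have hinit : ∀ i : Fin n, a i.castSucc = m := fun i => h _ (by simp)
    rw [Fin.sum_univ_castSucc] at hsum
    simp only [hinit, Finset.sum_const, Finset.card_univ, Fintype.card_fin, smul_eq_mul] at hsum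
    funext i
    by_cases hi : (i : ℕ) = n
    · have : i = Fin.last n := Fin.ext hi
      subst this
      simp only [concentrated, Fin.val_last, add_tsub_cancel_right, if_true]
      nlinarith
    · simp [concentrated, hi, h i (by omega)]

theorem reflTransGen_concentrated {s r : ℕ} (a : Fin k → ℕ) (hlb : ∀ i, s - 1 ≤ a i)
    (hsum : ∑ i, a i = (s - 1) * k + r) :
    ReflTransGen (SymmGen (FriendMove s)) a (concentrated (s - 1) r) := by
  by_cases hdone : ∀ i : Fin k, (i : ℕ) < k - 1 → a i = s - 1
  · rw [eq_concentrated hdone hsum]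
  push Not at hdone
  obtain ⟨i, hik, hne⟩ := hdone
  have hi : s - 1 < a i := lt_of_le_of_ne (hlb i) (Ne.symm hne)
  have hlt : moment (shiftRight a i) < moment a := by
    have := moment_shiftRight (by omega : (i : ℕ) + 1 < k) (by omega : 1 ≤ a i)
    omega
  refine .head (Or.inr (friendMove_shiftRight (succIdx_ne_self_of_lt (by omega)) (by omega)
    (hlb _))) (reflTransGen_concentrated _ (le_shiftRight hlb hi) ?_)
  rw [sum_shiftRight (by omega), hsum]
termination_by moment a

end GapSeq

theorem stmt_16_general (s k r : ℕ) (hs : 2 ≤ s)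
    (a : Fin k → ℕ) (ha : IsGapSeq (s * k + r) s k a) :
    Relation.ReflTransGen
      (fun x y : Fin k → ℕ => FriendMove s x y ∨ FriendMove s y x)
      a (fun i : Fin k => if (i : ℕ) = k - 1 then s - 1 + r else s - 1) := by
  obtain ⟨hlb, hsum⟩ := ha
  refine GapSeq.reflTransGen_concentrated a hlb ?_
  obtain ⟨t, rfl⟩ : ∃ t, s = t + 1 := ⟨s - 1, by omega⟩
  rw [hsum, add_tsub_cancel_right, add_mul, one_mul]
  omega

/-- Every valid gap sequence can be transformed into `(s-1, ..., s-1, s-1+r)` by a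
finite sequence of friend moves and their inverses, staying within valid gap
sequences at every step (validity is built into the friend move). -/
theorem stmt_16 (s k r : ℕ) (hs : 2 ≤ s) (hk : 1 ≤ k) (hr : 1 ≤ r)
    (a : Fin k → ℕ) (ha : IsGapSeq (s * k + r) s k a) :
    Relation.ReflTransGen
      (fun x y : Fin k → ℕ => FriendMove s x y ∨ FriendMove s y x)
      a (fun i : Fin k => if (i : ℕ) = k - 1 then s - 1 + r else s - 1) :=
  stmt_16_general s k r hs a ha
end

section
/- For s ≥ 2 and n ≥ sk + 1, the s-stable Kneser graph K_{s-stab}(n,k) is connected. -/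
open Finset

/-!
For `s ≥ 2` no two points of a stable set are neighbours, so rotating a stable set by one
is an edge, and every vertex is connected to a rotation containing `0`. Moving one point
`b` of a stable set `S` to `b - 1` keeps us in the same component whenever the result `S'`
is stable: both `S` and `S'` are disjoint from `S + 1`. If `0 ∈ S` and some `x ≠ 0` in `S`
has `x - s ∉ S`, the gap below `x` exceeds `s`, so `x` can be moved to `x - 1`; this lowers
the sum of the representatives in `[0, n)`. When no such `x` is left,
`S = {0, s, …, (k-1)s}`, a single vertex (stable as `sk ≤ n`).
-/

section stable

variable {n s k : ℕ} {S : Finset (ZMod n)}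

lemma cycDist_comm (x y : ZMod n) : cycDist x y = cycDist y x := min_comm _ _

lemma cycDist_self (x : ZMod n) : cycDist x x = 0 := by simp [cycDist]

lemma cycDist_add_right (t x y : ZMod n) : cycDist (x + t) (y + t) = cycDist x y := by
  simp only [cycDist, add_sub_add_right_eq_sub]

lemma cycDist_le_val_sub (x y : ZMod n) : cycDist x y ≤ (x - y).val := min_le_left _ _

lemma cycDist_eq_of_val_lt [NeZero n] {x y : ZMod n} (h : y.val < x.val) :
    cycDist x y = min (x.val - y.val) (n - (x.val - y.val)) := by
  have hxy : x - y ≠ 0 := sub_ne_zero.2 fun e => h.ne (by rw [e])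
  rw [cycDist, ← neg_sub x y, ZMod.neg_val, if_neg hxy, ZMod.val_sub h.le]

lemma le_cycDist_iff_of_val_lt [NeZero n] {x y : ZMod n} (h : y.val < x.val) :
    s ≤ cycDist x y ↔ s ≤ x.val - y.val ∧ x.val - y.val + s ≤ n := by
  have := x.val_lt
  rw [cycDist_eq_of_val_lt h, le_min_iff]
  omega

lemma IsStable.eq_of_cycDist_lt (hS : IsStable n s k S) {x y : ZMod n} (hx : x ∈ S) (hy : y ∈ S)
    (h : cycDist x y < s) : x = y := by
  by_contra hne
  exact (hS.2 x hx y hy hne).not_gt h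

lemma IsStable.le_val (hS : IsStable n s k S) (h0 : 0 ∈ S) {x : ZMod n} (hx : x ∈ S)
    (hx0 : x ≠ 0) : s ≤ x.val :=
  (hS.2 x hx 0 h0 hx0).trans ((cycDist_le_val_sub x 0).trans_eq (by rw [sub_zero]))

lemma IsStable.add_one_notMem (hS : IsStable n s k S) (hs : 2 ≤ s) (h1 : (1 : ZMod n) ≠ 0)
    {x : ZMod n} (hx : x ∈ S) : x + 1 ∉ S := by
  intro hx1
  have hdist : cycDist (x + 1) x < s :=
    calc cycDist (x + 1) x ≤ (x + 1 - x).val := cycDist_le_val_sub _ _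
      _ = 1 % n := by rw [add_sub_cancel_left, ZMod.val_one_eq_one_mod]
      _ < s := by have := Nat.mod_le 1 n; omega
  exact h1 (add_eq_left.1 (hS.eq_of_cycDist_lt hx1 hx hdist))

lemma IsStable.shift (hS : IsStable n s k S) (t : ZMod n) : IsStable n s k (shiftSet t S) := by
  refine ⟨by rw [shiftSet, card_image_of_injective _ (add_left_injective t), hS.1], ?_⟩
  simp only [shiftSet, mem_image]
  rintro _ ⟨x, hx, rfl⟩ _ ⟨y, hy, rfl⟩ hne
  rw [cycDist_add_right]
  exact hS.2 x hx y hy fun e => hne (by rw [e])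

lemma IsStable.insert_erase (hS : IsStable n s k S) (hs : 1 ≤ s) {x z : ZMod n} (hx : x ∈ S)
    (hz : ∀ y ∈ S, y ≠ x → s ≤ cycDist z y) : IsStable n s k (insert z (S.erase x)) := by
  have hzS : z ∉ S.erase x := fun h => by
    have := hz z (mem_of_mem_erase h) (ne_of_mem_erase h)
    rw [cycDist_self] at this
    omega
  refine ⟨by rw [card_insert_of_notMem hzS, card_erase_of_mem hx,
    Nat.sub_add_cancel (card_pos.2 ⟨x, hx⟩), hS.1], ?_⟩
  simp only [mem_insert, mem_erase]
  rintro i (rfl | ⟨hix, hi⟩) j (rfl | ⟨hjx, hj⟩) hij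
  · exact absurd rfl hij
  · exact hz j hj hjx
  · exact cycDist_comm i j ▸ hz i hi hix
  · exact hS.2 i hi j hj hij

end stable

section graph

variable {n s k : ℕ} {S T : Finset (ZMod n)}

lemma natCast_zmod_ne_zero_of_lt {m : ℕ} (h0 : 0 < m) (h : m < n) : (m : ZMod n) ≠ 0 := by
  rw [Ne, ZMod.natCast_eq_zero_iff]
  exact Nat.not_dvd_of_pos_of_lt h0 h

lemma stableKneser_adj_of_disjoint (hS : IsStable n s k S) (hT : IsStable n s k T)
    (hne : S.Nonempty) (h : Disjoint S T) : (stableKneser n s k).Adj ⟨S, hS⟩ ⟨T, hT⟩ := by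
  refine ⟨fun e => ?_, h⟩
  rw [Subtype.mk.injEq] at e
  subst e
  exact hne.ne_empty ((disjoint_self_iff_empty S).1 h)

lemma stableKneser_adj_shiftSet_one (hS : IsStable n s k S) (hs : 2 ≤ s) (hn : 1 < n)
    (hne : S.Nonempty) : (stableKneser n s k).Adj ⟨S, hS⟩ ⟨shiftSet 1 S, hS.shift 1⟩ := by
  have h1 : (1 : ZMod n) ≠ 0 := by exact_mod_cast natCast_zmod_ne_zero_of_lt one_pos hn
  refine stableKneser_adj_of_disjoint hS _ hne (disjoint_left.2 ?_)
  simp only [shiftSet, mem_image, not_exists, not_and]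
  rintro _ hx y hy rfl
  exact hS.add_one_notMem hs h1 hy hx

lemma stableKneser_reachable_shiftSet [NeZero n] (hS : IsStable n s k S) (hs : 2 ≤ s)
    (hn : 1 < n) (hne : S.Nonempty) (t : ZMod n) :
    (stableKneser n s k).Reachable ⟨S, hS⟩ ⟨shiftSet t S, hS.shift t⟩ := by
  obtain ⟨m, rfl⟩ := ZMod.natCast_zmod_surjective t
  induction m with
  | zero => convert SimpleGraph.Reachable.refl _; simp [shiftSet]
  | succ m ih =>
    refine ih.trans ?_
    convert (stableKneser_adj_shiftSet_one (hS.shift m) hs hn (hne.image _)).reachable using 2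
    ext1
    simp only [shiftSet, image_image, Function.comp_def, Nat.cast_succ, add_assoc]

lemma stableKneser_reachable_of_disjoint_shiftSet_one (hS : IsStable n s k S)
    (hT : IsStable n s k T) (hs : 2 ≤ s) (hn : 1 < n) (hne : S.Nonempty)
    (h : Disjoint (shiftSet 1 S) T) : (stableKneser n s k).Reachable ⟨S, hS⟩ ⟨T, hT⟩ :=
  (stableKneser_adj_shiftSet_one hS hs hn hne).reachable.trans
    (stableKneser_adj_of_disjoint _ hT (hne.image _) h).reachable

lemma stableKneser_reachable_insert_sub_one_erase (hS : IsStable n s k S) (hs : 2 ≤ s)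
    (hn : 2 < n) {b : ZMod n} (hb : b ∈ S) (hT : IsStable n s k (insert (b - 1) (S.erase b))) :
    (stableKneser n s k).Reachable ⟨S, hS⟩ ⟨insert (b - 1) (S.erase b), hT⟩ := by
  have h1 : (1 : ZMod n) ≠ 0 := by exact_mod_cast natCast_zmod_ne_zero_of_lt one_pos (by omega)
  have h2 : (2 : ZMod n) ≠ 0 := by exact_mod_cast natCast_zmod_ne_zero_of_lt two_pos hn
  refine stableKneser_reachable_of_disjoint_shiftSet_one hS hT hs (by omega) ⟨b, hb⟩
    (disjoint_left.2 ?_)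
  simp only [shiftSet, mem_image, mem_insert, mem_erase, forall_exists_index, and_imp]
  rintro _ a ha rfl (h | ⟨-, h⟩)
  · have hab : a ≠ b := fun e => h2 (by linear_combination h - e)
    exact hT.add_one_notMem hs h1 (mem_insert_of_mem (mem_erase.2 ⟨hab, ha⟩))
      (h ▸ mem_insert_self _ _)
  · exact hS.add_one_notMem hs h1 ha h

end graph

lemma Finset.eq_image_range_mul_of_sub_mem {s : ℕ} (hs : 0 < s) {T : Finset ℕ} (h0 : 0 ∈ T)
    (hT : ∀ a ∈ T, a ≠ 0 → s ≤ a ∧ a - s ∈ T) : T = (range #T).image (s * ·) := by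
  have hmul : ∀ a ∈ T, ∃ j, a = s * j ∧ ∀ i ≤ j, s * i ∈ T := by
    intro a
    induction a using Nat.strong_induction_on with
    | _ a ih =>
      intro ha
      rcases eq_or_ne a 0 with rfl | ha0
      · exact ⟨0, by simp, fun i hi => by simpa [Nat.le_zero.1 hi] using h0⟩
      obtain ⟨hsa, hsub⟩ := hT a ha ha0
      obtain ⟨j, hj, hle⟩ := ih (a - s) (by omega) hsub
      refine ⟨j + 1, by rw [Nat.mul_succ]; omega, fun i hi => ?_⟩
      rcases Nat.lt_succ_iff_lt_or_eq.1 (Nat.lt_succ_of_le hi) with hi | rfl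
      · exact hle i (Nat.lt_succ_iff.1 hi)
      · rwa [Nat.mul_succ, ← hj, Nat.sub_add_cancel hsa]
  refine eq_of_subset_of_card_le (fun a ha => ?_) (card_image_le.trans (card_range _).le)
  obtain ⟨j, rfl, hle⟩ := hmul a ha
  refine mem_image.2 ⟨j, mem_range.2 ?_, rfl⟩
  have hsub : (range (j + 1)).image (s * ·) ⊆ T := by
    simpa [subset_iff, Nat.lt_succ_iff] using hle
  have := card_le_card hsub
  rwa [card_image_of_injective _ (mul_right_injective₀ hs.ne'), card_range] at this

def spacedSet (n s k : ℕ) : Finset (ZMod n) := (range k).image fun i => ((s * i : ℕ) : ZMod n)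

section descent

variable {n s k : ℕ} [NeZero n] {S : Finset (ZMod n)}

lemma IsStable.insert_sub_one_erase (hS : IsStable n s k S) (hs : 2 ≤ s) (h0 : 0 ∈ S)
    {x : ZMod n} (hx : x ∈ S) (hx0 : x ≠ 0) (hxs : x - s ∉ S) :
    IsStable n s k (insert (x - 1) (S.erase x)) := by
  have hsx := hS.le_val h0 hx hx0
  have hxn := x.val_lt
  have h1 : (1 : ZMod n).val = 1 := ZMod.val_one'' (by omega)
  have hsv : (s : ZMod n).val = s := ZMod.val_cast_of_lt (by omega)
  have hx1 : (x - 1).val = x.val - 1 := by rw [ZMod.val_sub (by omega), h1]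
  have hxs' : (x - s).val = x.val - s := by rw [ZMod.val_sub (by omega), hsv]
  refine hS.insert_erase (by omega) hx fun y hy hyx => ?_
  have hyv : y.val ≠ x.val := fun e => hyx (ZMod.val_injective n e)
  rcases lt_or_gt_of_ne hyv with hlt | hgt
  · have hxy := (le_cycDist_iff_of_val_lt hlt).1 (hS.2 x hx y hy hyx.symm)
    have hys : y.val ≠ x.val - s := fun e => hxs (ZMod.val_injective n (e.trans hxs'.symm) ▸ hy)
    rw [le_cycDist_iff_of_val_lt (by omega), hx1]
    omega
  · have hyx' := (le_cycDist_iff_of_val_lt hgt).1 (hS.2 y hy x hx hyx)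
    have hy0 := (le_cycDist_iff_of_val_lt (by rw [ZMod.val_zero]; omega)).1
      (hS.2 y hy 0 h0 (by rintro rfl; simp at hgt))
    rw [cycDist_comm, le_cycDist_iff_of_val_lt (by omega), hx1]
    rw [ZMod.val_zero] at hy0
    omega

lemma isStable_spacedSet (hs : 0 < s) (hn : s * k ≤ n) : IsStable n s k (spacedSet n s k) := by
  have hval : ∀ i < k, ((s * i : ℕ) : ZMod n).val = s * i := fun i hi =>
    ZMod.val_cast_of_lt (lt_of_lt_of_le (Nat.mul_lt_mul_of_pos_left hi hs) hn)
  have hinj : Set.InjOn (fun i => ((s * i : ℕ) : ZMod n)) (range k) := by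
    intro i hi j hj e
    simp only [coe_range, Set.mem_Iio] at hi hj
    have := congrArg ZMod.val e
    rw [hval i hi, hval j hj] at this
    exact Nat.eq_of_mul_eq_mul_left hs this
  refine ⟨by rw [spacedSet, card_image_of_injOn hinj, card_range], ?_⟩
  simp only [spacedSet, mem_image, mem_range]
  rintro _ ⟨i, hi, rfl⟩ _ ⟨j, hj, rfl⟩ hij
  have hij' : i ≠ j := fun e => hij (by rw [e])
  wlog hlt : j < i generalizing i j
  · rw [cycDist_comm]
    exact this j hj i hi (Ne.symm hij) hij'.symm (by omega)
  have hlt' : s * j < s * i := Nat.mul_lt_mul_of_pos_left hlt hs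
  rw [le_cycDist_iff_of_val_lt (by rwa [hval i hi, hval j hj]), hval i hi, hval j hj,
    ← Nat.mul_sub]
  have h1 : s * 1 ≤ s * (i - j) := Nat.mul_le_mul_left s (by omega)
  have h2 : s * (i - j + 1) ≤ s * k := Nat.mul_le_mul_left s (by omega)
  rw [Nat.mul_add] at h2
  omega

lemma IsStable.eq_spacedSet (hS : IsStable n s k S) (hs : 0 < s) (h0 : 0 ∈ S)
    (hdown : ∀ x ∈ S, x ≠ 0 → x - s ∈ S) : S = spacedSet n s k := by
  have hvals : S.image ZMod.val = (range k).image (s * ·) := by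
    rw [← hS.1, ← card_image_of_injective S (ZMod.val_injective n)]
    refine Finset.eq_image_range_mul_of_sub_mem hs (mem_image.2 ⟨0, h0, ZMod.val_zero⟩) ?_
    simp only [mem_image, forall_exists_index, and_imp]
    rintro _ x hx rfl hx0
    have hx0' : x ≠ 0 := fun e => hx0 (by rw [e, ZMod.val_zero])
    have hsx := hS.le_val h0 hx hx0'
    have hsv : (s : ZMod n).val = s := ZMod.val_cast_of_lt (hsx.trans_lt x.val_lt)
    exact ⟨hsx, x - s, hdown x hx hx0', by rw [ZMod.val_sub (by omega), hsv]⟩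
  calc S = (S.image ZMod.val).image ((↑) : ℕ → ZMod n) := by
        rw [image_image]; simp [Function.comp_def]
    _ = spacedSet n s k := by rw [hvals, image_image]; rfl

lemma sum_val_insert_sub_one_erase_lt {x : ZMod n} (hx : x ∈ S)
    (hx0 : x ≠ 0) (hx1 : x - 1 ∉ S) :
    ∑ y ∈ insert (x - 1) (S.erase x), y.val < ∑ y ∈ S, y.val := by
  have h1 : (1 : ZMod n).val = 1 :=
    ZMod.val_one'' (by rintro rfl; exact hx0 (Subsingleton.elim _ _))
  have hpos : 0 < x.val := ZMod.val_pos.2 hx0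
  rw [sum_insert fun h => hx1 (mem_of_mem_erase h), ← add_sum_erase S _ hx,
    ZMod.val_sub (by omega), h1, add_comm]
  omega

lemma stableKneser_reachable_spacedSet_of_zero_mem (hs : 2 ≤ s) (hn : s * k + 1 ≤ n)
    (hS : IsStable n s k S) (h0 : 0 ∈ S) :
    (stableKneser n s k).Reachable ⟨S, hS⟩
      ⟨spacedSet n s k, isStable_spacedSet (by omega) (by omega)⟩ := by
  have hk : s ≤ s * k := Nat.le_mul_of_pos_right s (hS.1 ▸ card_pos.2 ⟨0, h0⟩)
  have h1 : (1 : ZMod n) ≠ 0 := by exact_mod_cast natCast_zmod_ne_zero_of_lt one_pos (by omega)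
  induction hsum : ∑ x ∈ S, x.val using Nat.strong_induction_on generalizing S with
  | _ m ih =>
    by_cases hterm : ∀ x ∈ S, x ≠ 0 → x - s ∈ S
    · obtain rfl := hS.eq_spacedSet (by omega) h0 hterm
      rfl
    push Not at hterm
    obtain ⟨x, hx, hx0, hxs⟩ := hterm
    have hT := hS.insert_sub_one_erase hs h0 hx hx0 hxs
    have hx1 : x - 1 ∉ S := fun h => hS.add_one_notMem hs h1 h (by rwa [sub_add_cancel])
    refine (stableKneser_reachable_insert_sub_one_erase hS hs (by omega) hx hT).trans
      (ih _ ?_ hT (mem_insert_of_mem (mem_erase.2 ⟨hx0.symm, h0⟩)) rfl)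
    exact hsum ▸ sum_val_insert_sub_one_erase_lt hx hx0 hx1

lemma stableKneser_reachable_spacedSet (hs : 2 ≤ s) (hn : s * k + 1 ≤ n)
    (A : {S : Finset (ZMod n) // IsStable n s k S}) :
    (stableKneser n s k).Reachable A
      ⟨spacedSet n s k, isStable_spacedSet (by omega) (by omega)⟩ := by
  obtain ⟨S, hS⟩ := A
  rcases S.eq_empty_or_nonempty with rfl | ⟨a, ha⟩
  · convert SimpleGraph.Reachable.refl _ using 2
    ext1
    rw [spacedSet, ← hS.1, card_empty, range_zero, image_empty]
  · have hk : s ≤ s * k := Nat.le_mul_of_pos_right s (hS.1 ▸ card_pos.2 ⟨a, ha⟩)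
    have h0 : 0 ∈ shiftSet (-a) S := mem_image.2 ⟨a, ha, add_neg_cancel a⟩
    exact (stableKneser_reachable_shiftSet hS hs (by omega) ⟨a, ha⟩ (-a)).trans
      (stableKneser_reachable_spacedSet_of_zero_mem hs hn _ h0)

end descent

/-- For `s ≥ 2` and `n ≥ s*k + 1`, the `s`-stable Kneser graph is connected. -/
theorem stmt_17 (n s k : ℕ) (hs : 2 ≤ s) (hn : s * k + 1 ≤ n) :
    (stableKneser n s k).Connected := by
  have : NeZero n := ⟨by omega⟩
  rw [SimpleGraph.connected_iff]
  refine ⟨fun A B => ?_, ⟨_, isStable_spacedSet (by omega) (by omega)⟩⟩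
  exact (stableKneser_reachable_spacedSet hs hn A).trans
    (stableKneser_reachable_spacedSet hs hn B).symm
end
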